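/- arXiv:2506.20562 — 3 statements merged into one kernel-verified Lean document; each statement's English description precedes it below -/
import Mathlib

section
/- Let k be a finite field of characteristic 3 with |k| = 3^n where n is odd. Then the elliptic curve E : y^2 = x^3 - x over k has exactly 3^n + 1 points, i.e. the group of points of E over k (including the point at infinity) has cardinality 3^n + 1. -/
/-!
For each `x` there are `1 + χ(x³ - x)` values of `y` with `y² = x³ - x`, where `χ` is the
quadratic character of `k`. When `|k| ≡ 3 mod 4`, `-1` is a non-square, so `χ(-1) = -1`; as
`x ↦ x³ - x` is odd, the terms for `x` and `-x` cancel and the character sum vanishes. Hence there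
are exactly `|k|` affine points, and the point at infinity makes `|k| + 1`.
-/

open Finset

lemma Nat.three_pow_mod_four_of_odd {n : ℕ} (hn : Odd n) : 3 ^ n % 4 = 3 := by
  obtain ⟨m, rfl⟩ := hn
  rw [pow_succ, pow_mul, Nat.mul_mod, Nat.pow_mod]
  norm_num

namespace FiniteField

variable {F : Type*} [Field F] [Fintype F]

lemma ringChar_ne_two_of_card_mod_four_eq_three (hF : Fintype.card F % 4 = 3) :
    ringChar F ≠ 2 := by
  rw [Ne, even_card_iff_char_two]
  omega

lemma quadraticChar_neg_one_of_card_mod_four_eq_three [DecidableEq F]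
    (hF : Fintype.card F % 4 = 3) : quadraticChar F (-1) = -1 :=
  quadraticChar_neg_one_iff_not_isSquare.mpr <| by
    rw [isSquare_neg_one_iff, not_not, hF]

variable [DecidableEq F]

lemma card_sq_eq_apply_eq_card_add_sum_quadraticChar (hF : ringChar F ≠ 2) (f : F → F) :
    (Fintype.card {p : F × F // p.2 ^ 2 = f p.1} : ℤ) =
      Fintype.card F + ∑ x, quadraticChar F (f x) := by
  have hfiber (x : F) : (Fintype.card {y // y ^ 2 = f x} : ℤ) = quadraticChar F (f x) + 1 := by
    rw [← quadraticChar_card_sqrts hF, Set.toFinset_card]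
    rfl
  rw [Fintype.card_congr (Equiv.subtypeProdEquivSigmaSubtype fun x y => y ^ 2 = f x),
    Fintype.card_sigma, Nat.cast_sum]
  simp only [hfiber, sum_add_distrib, sum_const, card_univ, nsmul_eq_mul, mul_one]
  ring

lemma sum_quadraticChar_eq_zero_of_odd (hneg : quadraticChar F (-1) = -1) {f : F → F}
    (hf : f.Odd) : ∑ x, quadraticChar F (f x) = 0 := by
  have hreflect : ∑ x, quadraticChar F (f (-x)) = ∑ x, quadraticChar F (f x) :=
    Fintype.sum_equiv (Equiv.neg F) _ _ fun _ => rfl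
  have hodd (x : F) : quadraticChar F (f (-x)) = -quadraticChar F (f x) := by
    rw [hf, neg_eq_neg_one_mul, map_mul, hneg, neg_one_mul]
  simp only [hodd, sum_neg_distrib] at hreflect
  linarith

end FiniteField

lemma WeierstrassCurve.Affine.natCard_point_eq_natCard_equation_add_one {F : Type*} [Field F]
    [Finite F] (W : Affine F) [W.IsElliptic] :
    Nat.card W.Point = Nat.card {xy : F × F // W.Equation xy.1 xy.2} + 1 := by
  rw [Nat.card_congr W.pointEquiv]
  exact Finite.card_option

abbrev WeierstrassCurve.ySqEqXCubeSubX (R : Type*) [CommRing R] : WeierstrassCurve R :=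
  ⟨0, 0, 0, -1, 0⟩

namespace WeierstrassCurve.ySqEqXCubeSubX

lemma equation_iff {R : Type*} [CommRing R] {x y : R} :
    (ySqEqXCubeSubX R).toAffine.Equation x y ↔ y ^ 2 = x ^ 3 - x := by
  rw [Affine.equation_iff]
  constructor <;> intro h <;> linear_combination h

lemma Δ_eq (R : Type*) [CommRing R] : (ySqEqXCubeSubX R).Δ = 64 := by
  simp only [Δ, b₂, b₄, b₆, b₈]
  ring

variable {F : Type*} [Field F]

lemma isElliptic_of_ringChar_ne_two (hF : ringChar F ≠ 2) : (ySqEqXCubeSubX F).IsElliptic := by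
  refine ⟨Δ_eq F ▸ isUnit_iff_ne_zero.mpr ?_⟩
  rw [show (64 : F) = 2 ^ 6 by norm_num]
  exact pow_ne_zero _ (Ring.two_ne_zero hF)

lemma natCard_point_of_card_mod_four_eq_three [Fintype F] (hF : Fintype.card F % 4 = 3) :
    Nat.card (ySqEqXCubeSubX F).toAffine.Point = Fintype.card F + 1 := by
  classical
  have hchar := FiniteField.ringChar_ne_two_of_card_mod_four_eq_three hF
  have := isElliptic_of_ringChar_ne_two hchar
  have hsum : ∑ x : F, quadraticChar F (x ^ 3 - x) = 0 :=
    FiniteField.sum_quadraticChar_eq_zero_of_odd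
      (FiniteField.quadraticChar_neg_one_of_card_mod_four_eq_three hF) fun x => by ring
  have haffine : Nat.card {xy : F × F // xy.2 ^ 2 = xy.1 ^ 3 - xy.1} = Fintype.card F := by
    have hcount := FiniteField.card_sq_eq_apply_eq_card_add_sum_quadraticChar hchar
      fun x => x ^ 3 - x
    rw [hsum, add_zero] at hcount
    rw [Nat.card_eq_fintype_card]
    exact_mod_cast hcount
  rw [Affine.natCard_point_eq_natCard_equation_add_one,
    Nat.card_congr (Equiv.subtypeEquivRight fun _ => equation_iff), haffine]

end WeierstrassCurve.ySqEqXCubeSubX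

theorem point_count_y2_eq_x3_sub_x_of_odd_general (k : Type*) [Field k] [Fintype k]
    (n : ℕ) (hn : Odd n) (hcard : Fintype.card k = 3 ^ n) :
    Nat.card (WeierstrassCurve.Affine.Point (⟨0, 0, 0, -1, 0⟩ : WeierstrassCurve k)) = 3 ^ n + 1 := by
  rw [← hcard]
  exact WeierstrassCurve.ySqEqXCubeSubX.natCard_point_of_card_mod_four_eq_three
    (hcard ▸ Nat.three_pow_mod_four_of_odd hn)

/-- The elliptic curve `y² = x³ - x` over a finite field `k` of characteristic 3 with
`|k| = 3 ^ n`, `n` odd, has exactly `3 ^ n + 1` points (including the point at infinity). -/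
theorem point_count_y2_eq_x3_sub_x_of_odd (k : Type*) [Field k] [Fintype k] [CharP k 3]
    (n : ℕ) (hn : Odd n) (hcard : Fintype.card k = 3 ^ n) :
    Nat.card (WeierstrassCurve.Affine.Point (⟨0, 0, 0, -1, 0⟩ : WeierstrassCurve k)) = 3 ^ n + 1 :=
  point_count_y2_eq_x3_sub_x_of_odd_general k n hn hcard
end

section
/- Let k be a finite field of characteristic 2 with |k| = 2^n where n is odd. Then the elliptic curve E : y^2 + y = x^3 over k has exactly 2^n + 1 points, i.e. the group of points of E over k (including the point at infinity) has cardinality 2^n + 1. -/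
/-!
In characteristic 2 the curve `y² + y = x³` is smooth, and when `3 ∤ |k| - 1` cubing is a
bijection of `k`, so every `y ∈ k` lies on exactly one affine point, namely `(∛(y² + y), y)`.
The affine points are thus in bijection with `k`. For `|k| = 2 ^ n` with `n` odd,
`2 ^ n ≡ 2 [MOD 3]`, so `3 ∤ 2 ^ n - 1`.
-/

open Function

lemma Nat.coprime_two_pow_sub_one_three_of_odd {n : ℕ} (hn : Odd n) : (2 ^ n - 1).Coprime 3 := by
  obtain ⟨k, rfl⟩ := hn
  have hmod : 2 ^ (2 * k + 1) % 3 = 2 := by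
    rw [pow_succ, pow_mul, Nat.mul_mod, Nat.pow_mod]
    norm_num
  have hpos : 1 ≤ 2 ^ (2 * k + 1) := Nat.one_le_two_pow
  refine Nat.coprime_comm.1 ((Nat.Prime.coprime_iff_not_dvd Nat.prime_three).2 ?_)
  generalize 2 ^ (2 * k + 1) = q at *
  omega

lemma pow_bijective_of_coprime_card_sub_one {K : Type*} [GroupWithZero K] [Finite K] {m : ℕ}
    (hm0 : m ≠ 0) (hm : (Nat.card K - 1).Coprime m) : Bijective (· ^ m : K → K) := by
  refine Finite.injective_iff_bijective.1 fun a b hab => ?_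
  rcases eq_or_ne a 0 with rfl | ha
  · exact ((pow_eq_zero_iff hm0).1 (hab.symm.trans (zero_pow hm0))).symm
  have hb : b ≠ 0 := by
    rintro rfl
    exact ha ((pow_eq_zero_iff hm0).1 (hab.trans (zero_pow hm0)))
  have hunits : (Units.mk0 a ha) ^ m = (Units.mk0 b hb) ^ m := Units.ext (by simpa using hab)
  rw [← Nat.card_units] at hm
  simpa using congrArg Units.val (hm.pow_left_bijective.1 hunits)

namespace WeierstrassCurve

variable (R : Type*) [CommRing R]

abbrev ySqAddYEqXCube : WeierstrassCurve R := ⟨0, 0, 1, 0, 0⟩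

namespace ySqAddYEqXCube

variable {R}

lemma equation_iff (x y : R) : (ySqAddYEqXCube R).toAffine.Equation x y ↔ y ^ 2 + y = x ^ 3 := by
  rw [Affine.equation_iff]
  simp

lemma nonsingular_of_equation [CharP R 2] {x y : R}
    (h : (ySqAddYEqXCube R).toAffine.Equation x y) :
    (ySqAddYEqXCube R).toAffine.Nonsingular x y := by
  have : Nontrivial R := CharP.nontrivial_of_char_ne_one (v := 2) (by norm_num)
  refine (Affine.nonsingular_iff' x y).2 ⟨h, Or.inr ?_⟩
  simp [CharTwo.two_eq_zero]

variable [CharP R 2]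

noncomputable def pointEquivOption (hcube : Bijective (· ^ 3 : R → R)) :
    (ySqAddYEqXCube R).toAffine.Point ≃ Option R :=
  let cbrt := (Equiv.ofBijective _ hcube).symm
  have hpt (y : R) : (ySqAddYEqXCube R).toAffine.Nonsingular (cbrt (y ^ 2 + y)) y :=
    nonsingular_of_equation <|
      (equation_iff _ _).2 (Equiv.ofBijective_apply_symm_apply _ hcube _).symm
  { toFun
      | .zero => none
      | .some _ y _ => some y
    invFun
      | none => .zero
      | some y => .some _ _ (hpt y)
    left_inv := by
      rintro (_ | @⟨x, y, h⟩)
      · rfl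
      · have hx : cbrt (y ^ 2 + y) = x := by
          rw [(equation_iff x y).1 h.1]
          exact (Equiv.ofBijective _ hcube).symm_apply_apply x
        subst hx
        rfl
    right_inv := by rintro (_ | y) <;> rfl }

lemma natCard_point [Finite R] (hcube : Bijective (· ^ 3 : R → R)) :
    Nat.card (ySqAddYEqXCube R).toAffine.Point = Nat.card R + 1 := by
  rw [Nat.card_congr (pointEquivOption hcube), Finite.card_option]

end ySqAddYEqXCube

end WeierstrassCurve

/-- The elliptic curve `y² + y = x³` over a finite field `k` of characteristic 2 with
`|k| = 2 ^ n`, `n` odd, has exactly `2 ^ n + 1` points (including the point at infinity). -/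
theorem point_count_y2_add_y_eq_x3_of_odd (k : Type*) [Field k] [Fintype k] [CharP k 2]
    (n : ℕ) (hn : Odd n) (hcard : Fintype.card k = 2 ^ n) :
    Nat.card (WeierstrassCurve.Affine.Point (⟨0, 0, 1, 0, 0⟩ : WeierstrassCurve k)) = 2 ^ n + 1 := by
  rw [← Nat.card_eq_fintype_card] at hcard
  have hcube : Bijective (· ^ 3 : k → k) :=
    pow_bijective_of_coprime_card_sub_one three_ne_zero
      (hcard ▸ Nat.coprime_two_pow_sub_one_three_of_odd hn)
  rw [WeierstrassCurve.ySqAddYEqXCube.natCard_point hcube, hcard]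
end

section
/- Let k be a finite field of characteristic 2 with |k| = 2^n where n is even. Then the elliptic curve E : y^2 + y = x^3 over k has exactly 2^n + 1 - 2·(-2)^(n/2) points (as an integer identity for the cardinality of the group of points of E over k, including the point at infinity). -/
/-!
Let `ψ(u) = (-1) ^ Tr(u)`, the additive character of `k` given by the trace to `𝔽₂`. The
equation `y² + y = u` has `1 + ψ(u)` solutions, so `#E(k) = q + 1 + S` with `S = ∑ₓ ψ(x³)`.
Substituting `y = x + t` in `S² = ∑_{x,y} ψ(x³ + y³)` turns the inner sum over `x` into a sum of
`ψ` over an additive function of `x`, which vanishes unless `t⁴ = t`; for `n` even this gives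
`S² = 4q`. Hence `S = ±2 ^ (n/2 + 1)`, and the sign is fixed by `3 ∣ #E(k)`, the point `(0, 0)`
being a flex and hence of order `3`.
-/

open Finset WeierstrassCurve.Affine

theorem FiniteField.trace_pow_char {p : ℕ} [Fact p.Prime] {k : Type*} [Field k] [Finite k]
    [Algebra (ZMod p) k] (a : k) :
    Algebra.trace (ZMod p) k (a ^ p) = Algebra.trace (ZMod p) k a := by
  have := Algebra.trace_eq_of_algEquiv (FiniteField.frobeniusAlgEquivOfAlgebraic (ZMod p) k) a
  rwa [FiniteField.coe_frobeniusAlgEquivOfAlgebraic, ZMod.card] at this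

theorem eq_neg_two_pow_of_sq_eq {S : ℤ} {m : ℕ} (hsq : S ^ 2 = 4 ^ (m + 1))
    (hS : (S : ZMod 3) = 1) : S = (-2) ^ (m + 1) := by
  have h4 : (4 : ℤ) ^ (m + 1) = ((-2) ^ (m + 1)) ^ 2 := by
    rw [← pow_mul, mul_comm, pow_mul]
    norm_num
  rcases sq_eq_sq_iff_eq_or_eq_neg.1 (hsq.trans h4) with h | h
  · exact h
  · have h2 : ((-2 : ℤ) : ZMod 3) = 1 := by decide
    rw [h, Int.cast_neg, Int.cast_pow, h2, one_pow] at hS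
    exact absurd hS (by decide)

namespace CharTwo

noncomputable def traceChar (k : Type*) [CommRing k] [Algebra (ZMod 2) k] : AddChar k ℤ :=
  (AddChar.zmodChar 2 (by norm_num : (-1 : ℤ) ^ 2 = 1)).compAddMonoidHom
    (Algebra.trace (ZMod 2) k).toAddMonoidHom

section TraceChar

variable {k : Type*} [Field k] [Algebra (ZMod 2) k]

theorem traceChar_apply (u : k) :
    traceChar k u = (-1) ^ (Algebra.trace (ZMod 2) k u).val :=
  rfl

theorem traceChar_one_eq_neg_one_pow [Fintype k] {n : ℕ} (hcard : Fintype.card k = 2 ^ n) :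
    traceChar k 1 = (-1) ^ n := by
  have hfinrank : Module.finrank (ZMod 2) k = n := by
    have := Module.card_eq_pow_finrank (K := ZMod 2) (V := k)
    rw [ZMod.card, hcard] at this
    exact (Nat.pow_right_injective le_rfl this).symm
  have htr : Algebra.trace (ZMod 2) k 1 = n := by
    simpa [hfinrank] using Algebra.trace_algebraMap (R := ZMod 2) (S := k) 1
  rw [traceChar, AddChar.compAddMonoidHom_apply, LinearMap.toAddMonoidHom_coe, htr,
    AddChar.zmodChar_apply']

theorem traceChar_sq [Finite k] (a : k) : traceChar k (a ^ 2) = traceChar k a := by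
  rw [traceChar_apply, traceChar_apply, FiniteField.trace_pow_char]

theorem traceChar_ne_one [Finite k] : traceChar k ≠ 1 := by
  obtain ⟨u, hu⟩ := Algebra.trace_surjective (ZMod 2) k 1
  refine AddChar.ne_one_iff.2 ⟨u, ?_⟩
  rw [traceChar_apply, hu]
  decide

theorem isPrimitive_traceChar [Finite k] : (traceChar k).IsPrimitive :=
  AddChar.IsPrimitive.of_ne_one traceChar_ne_one

variable [CharP k 2]

theorem traceChar_sq_add_self [Finite k] (y : k) : traceChar k (y ^ 2 + y) = 1 := by
  rw [AddChar.map_add_eq_mul, traceChar_sq, ← AddChar.map_add_eq_mul, CharTwo.add_self_eq_zero,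
    AddChar.map_zero_eq_one]

omit [Algebra (ZMod 2) k] in
theorem eq_or_eq_add_one_of_sq_add_self_eq {y y₀ : k} (h : y ^ 2 + y = y₀ ^ 2 + y₀) :
    y = y₀ ∨ y = y₀ + 1 := by
  have hfac : (y + y₀) * (y + y₀ + 1) = 0 := by
    linear_combination h + (y * y₀ + y₀ ^ 2 + y₀) * CharTwo.two_eq_zero (R := k)
  rcases mul_eq_zero.1 hfac with h0 | h1
  · exact Or.inl (CharTwo.add_eq_zero.1 h0)
  · exact Or.inr (CharTwo.add_eq_zero.1 (by rwa [← add_assoc]))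

variable [Fintype k] [DecidableEq k]

theorem card_sq_add_self_eq_le (u : k) :
    (#{y | y ^ 2 + y = u} : ℤ) ≤ 1 + traceChar k u := by
  by_cases hu : ∃ y₀, y₀ ^ 2 + y₀ = u
  · obtain ⟨y₀, rfl⟩ := hu
    have hsub : ({y | y ^ 2 + y = y₀ ^ 2 + y₀} : Finset k) ⊆ {y₀, y₀ + 1} := fun y hy => by
      simpa using eq_or_eq_add_one_of_sq_add_self_eq (mem_filter.1 hy).2
    rw [traceChar_sq_add_self]
    exact_mod_cast (card_le_card hsub).trans (card_le_two (a := y₀) (b := y₀ + 1))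
  · rw [filter_false_of_mem fun y _ hy => hu ⟨y, hy⟩, card_empty, Nat.cast_zero]
    rcases neg_one_pow_eq_or ℤ (Algebra.trace (ZMod 2) k u).val with h | h <;>
      rw [traceChar_apply, h] <;> norm_num

/-- Both sides sum to `#k` over `u`, so the pointwise inequality above is an equality. -/
theorem card_sq_add_self_eq (u : k) : (#{y | y ^ 2 + y = u} : ℤ) = 1 + traceChar k u := by
  have hsum : ∑ u : k, (#{y | y ^ 2 + y = u} : ℤ) = ∑ u : k, (1 + traceChar k u) := by
    rw [sum_add_distrib, AddChar.sum_eq_zero_of_ne_one traceChar_ne_one, add_zero,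
      ← Nat.cast_sum, ← card_eq_sum_card_fiberwise fun y _ => mem_univ (y ^ 2 + y)]
    simp
  exact (sum_eq_sum_iff_of_le fun u _ => card_sq_add_self_eq_le u).1 hsum u (mem_univ u)

theorem sum_traceChar_sq_mul (b : k) :
    ∑ x : k, traceChar k (x ^ 2 * b) = if b = 0 then (Fintype.card k : ℤ) else 0 := by
  have h := AddChar.sum_mulShift b (isPrimitive_traceChar (k := k))
  push_cast at h
  rw [← h]
  exact (frobeniusEquiv k 2).toEquiv.sum_comp fun x => traceChar k (x * b)

theorem sum_traceChar_mul_sq_add_sq_mul (t : k) :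
    ∑ x : k, traceChar k (t * x ^ 2 + t ^ 2 * x) =
      if t ^ 4 + t = 0 then (Fintype.card k : ℤ) else 0 := by
  have h (x : k) : traceChar k (t * x ^ 2 + t ^ 2 * x) = traceChar k (x ^ 2 * (t ^ 4 + t)) := by
    rw [AddChar.map_add_eq_mul, ← traceChar_sq (t ^ 2 * x), ← AddChar.map_add_eq_mul]
    ring_nf
  simp only [h, sum_traceChar_sq_mul]

theorem card_pow_four_add_self_eq_zero :
    (#{t : k | t ^ 4 + t = 0} : ℤ) = 3 + traceChar k 1 := by
  have hsplit : ({t | t ^ 4 + t = 0} : Finset k) =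
      ({t | t ^ 2 + t = 0} : Finset k) ∪ ({t | t ^ 2 + t = 1} : Finset k) := by
    ext t
    have hfac : t ^ 4 + t = (t ^ 2 + t) * (t ^ 2 + t + 1) := by
      linear_combination (-t ^ 3 - t ^ 2) * CharTwo.two_eq_zero (R := k)
    simp only [mem_union, mem_filter, mem_univ, true_and]
    rw [hfac, mul_eq_zero, CharTwo.add_eq_zero (a := t ^ 2 + t)]
  rw [hsplit, card_union_of_disjoint (disjoint_filter.2 fun t _ h0 h1 => by simp_all),
    Nat.cast_add, card_sq_add_self_eq, card_sq_add_self_eq, AddChar.map_zero_eq_one]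
  ring

omit [DecidableEq k] in
theorem sq_sum_traceChar_cube (h1 : traceChar k 1 = 1) :
    (∑ x : k, traceChar k (x ^ 3)) ^ 2 = 4 * Fintype.card k := by
  -- not `classical`: its instance would enter the filters as a beta-redex that `rw` cannot match
  have := Classical.decEq k
  have hcube (x t : k) : x ^ 3 + (x + t) ^ 3 = t ^ 3 + (t * x ^ 2 + t ^ 2 * x) := by
    linear_combination (x ^ 3 + x ^ 2 * t + x * t ^ 2) * CharTwo.two_eq_zero (R := k)
  have hroot {t : k} (ht : t ^ 4 + t = 0) : traceChar k (t ^ 3) = 1 := by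
    have : t * (t ^ 3 + 1) = 0 := by linear_combination ht
    rcases mul_eq_zero.1 this with rfl | h
    · simp
    · rw [CharTwo.add_eq_zero.1 h, h1]
  calc (∑ x : k, traceChar k (x ^ 3)) ^ 2
      = ∑ x : k, ∑ t : k, traceChar k (x ^ 3 + (x + t) ^ 3) := by
        rw [sq, sum_mul_sum]
        refine sum_congr rfl fun x _ => ?_
        rw [← Equiv.sum_comp (Equiv.addLeft x)]
        simp only [Equiv.coe_addLeft, AddChar.map_add_eq_mul]
    _ = ∑ t : k, traceChar k (t ^ 3) * ∑ x : k, traceChar k (t * x ^ 2 + t ^ 2 * x) := by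
        rw [sum_comm]
        simp only [hcube, AddChar.map_add_eq_mul, mul_sum]
    _ = ∑ t : k, if t ^ 4 + t = 0 then (Fintype.card k : ℤ) else 0 := by
        refine sum_congr rfl fun t _ => ?_
        rw [sum_traceChar_mul_sq_add_sq_mul]
        split_ifs with ht
        · rw [hroot ht, one_mul]
        · rw [mul_zero]
    _ = 4 * Fintype.card k := by
        rw [sum_ite, sum_const_zero, add_zero, sum_const, nsmul_eq_mul,
          card_pow_four_add_self_eq_zero, h1]
        norm_num

end TraceChar

abbrev E (k : Type*) [CommRing k] : WeierstrassCurve.Affine k := ⟨0, 0, 1, 0, 0⟩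

theorem equation_E_iff {k : Type*} [CommRing k] (x y : k) :
    (E k).Equation x y ↔ y ^ 2 + y = x ^ 3 := by
  rw [equation_iff]
  ring_nf

section Curve

variable {k : Type*} [Field k] [CharP k 2]

instance isElliptic_E : (E k).IsElliptic := by
  rw [WeierstrassCurve.isElliptic_iff]
  simp [WeierstrassCurve.Δ, WeierstrassCurve.b₂, WeierstrassCurve.b₄, WeierstrassCurve.b₆,
    WeierstrassCurve.b₈]

theorem natCard_point_E [Fintype k] [DecidableEq k] :
    Nat.card (E k).Point = ∑ x : k, #{y | y ^ 2 + y = x ^ 3} + 1 := by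
  rw [Nat.card_congr (E k).pointEquiv, WithZero, Finite.card_option,
    Nat.card_congr (Equiv.subtypeEquivRight fun p : k × k => equation_E_iff p.1 p.2),
    Nat.card_eq_fintype_card, Fintype.card_subtype, card_filter, Fintype.sum_prod_type]
  simp only [card_filter]

theorem natCard_point_E_eq [Fintype k] [Algebra (ZMod 2) k] :
    (Nat.card (E k).Point : ℤ) = Fintype.card k + 1 + ∑ x : k, traceChar k (x ^ 3) := by
  have := Classical.decEq k
  rw [natCard_point_E]
  push_cast
  simp only [card_sq_add_self_eq, sum_add_distrib, sum_const, card_univ, nsmul_eq_mul, mul_one]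
  ring

/-- The tangent at `(0, 0)` is `y = 0`, so `2 • (0, 0) = (0, 1) = -(0, 0)`. -/
theorem three_dvd_natCard_point_E : 3 ∣ Nat.card (E k).Point := by
  classical
  let P : (E k).Point := Point.mk ((equation_E_iff (0 : k) 0).2 (by ring))
  have hP : P + P = -P := by
    simp only [P, Point.mk]
    rw [Point.add_self_of_Y_ne']
    · simp [negAddY, addX, WeierstrassCurve.Affine.slope]
    · simp [negY]
  have : Fact (Nat.Prime 3) := ⟨Nat.prime_three⟩
  have hP3 : addOrderOf P = 3 :=
    addOrderOf_eq_prime (by rw [succ_nsmul, two_nsmul, hP, neg_add_cancel]) (Point.some_ne_zero _)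
  exact hP3 ▸ addOrderOf_dvd_natCard P

end Curve

end CharTwo

open CharTwo in
/-- The elliptic curve `y² + y = x³` over a finite field `k` of characteristic 2 with
`|k| = 2 ^ n`, `n` even, has exactly `2 ^ n + 1 - 2 * (-2) ^ (n / 2)` points
(including the point at infinity). -/
theorem point_count_y2_add_y_eq_x3_of_even (k : Type*) [Field k] [Fintype k] [CharP k 2]
    (n : ℕ) (hn : Even n) (hcard : Fintype.card k = 2 ^ n) :
    (Nat.card (WeierstrassCurve.Affine.Point (⟨0, 0, 1, 0, 0⟩ : WeierstrassCurve k)) : ℤ) =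
      2 ^ n + 1 - 2 * (-2) ^ (n / 2) := by
  let _ : Algebra (ZMod 2) k := ZMod.algebra k 2
  have h1 : traceChar k 1 = 1 := by rw [traceChar_one_eq_neg_one_pow hcard, hn.neg_one_pow]
  obtain ⟨m, rfl⟩ := hn
  have hq : (Fintype.card k : ℤ) = 4 ^ m := by
    rw [hcard, ← two_mul, pow_mul]
    norm_num
  have hcount := natCard_point_E_eq (k := k)
  set S := ∑ x : k, traceChar k (x ^ 3)
  have hsq : S ^ 2 = 4 ^ (m + 1) := by rw [sq_sum_traceChar_cube h1, hq, pow_succ, mul_comm]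
  have hS3 : (S : ZMod 3) = 1 := by
    have h3 : (3 : ℤ) ∣ Nat.card (E k).Point := mod_cast three_dvd_natCard_point_E
    rw [hcount] at h3
    replace h3 := (ZMod.intCast_zmod_eq_zero_iff_dvd _ 3).2 h3
    push_cast [hq] at h3
    rw [show (4 : ZMod 3) = 1 by decide, one_pow] at h3
    linear_combination h3 - (by decide : (3 : ZMod 3) = 0)
  rw [show (m + m) / 2 = m by omega, hcount, eq_neg_two_pow_of_sq_eq hsq hS3, hq,
    ← two_mul, pow_mul]
  ring
end
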